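/- Let Γ be a finite vertex-transitive graph with vertex set VΓ = {1, −1, …, m, −m} × [k] whose full automorphism group G = Aut(Γ) satisfies X^k ≤ G ≤ Y ≀ Sym(k), where X = {1} × Sym(m) and Y = ⟨τ⟩ × Sym(m) ≤ C2 ≀ Sym(m), with X^k in the base group; assume moreover that the pointwise stabiliser in G of the complement of D_1 equals X, where D_j = {1, −1, …, m, −m} × {j} and D = {D_1, …, D_k}. Then: (1) all induced subgraphs Γ[D_j] are mutually isomorphic, and Γ[D_1] is isomorphic to mK_2, K_m □ K_2, the complement of mK_2, or the complement of K_m □ K_2; (2) Γ ≅ Inf_{λ,κ}(Γ/X^k, D/X^k, m), where (λ,κ) = (1,0), (1,1), (0,1), (0,0) according as Γ[D_1] is isomorphic to mK_2, K_m □ K_2, complement of mK_2, complement of K_m □ K_2, respectively; and (3) the quotient graph Γ/X^k admits no transposition preserving the partition D/X^k as an automorphism. -/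

import Mathlib

open Equiv Pointwise

/-- A graph is vertex-transitive if its automorphism group is transitive on the
vertices. -/
def IsVertexTransitive {V : Type*} (Γ : SimpleGraph V) : Prop :=
  ∀ u v : V, ∃ e : Γ ≃g Γ, e u = v

/-- The motion of a graph: the least number of vertices moved by a non-identity
automorphism (i.e. the minimal degree of its automorphism group). -/
noncomputable def motion {V : Type*} [Fintype V] [DecidableEq V] (Γ : SimpleGraph V) : ℕ :=
  sInf {n | ∃ e : Γ ≃g Γ, (e.toEquiv : Equiv.Perm V) ≠ 1 ∧
    (Equiv.Perm.support (e.toEquiv : Equiv.Perm V)).card = n}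

/-- The element of the imprimitive wreath product determined by a function
`g : ι → Perm Δ` and a permutation `h` of the index set, acting on `Δ × ι` by
`(δ, i) ↦ (g i δ, h i)`. -/
def wreathPerm {Δ ι : Type*} (g : ι → Equiv.Perm Δ) (h : Equiv.Perm ι) :
    Equiv.Perm (Δ × ι) where
  toFun x := (g x.2 x.1, h x.2)
  invFun x := ((g (h⁻¹ x.2))⁻¹ x.1, h⁻¹ x.2)
  left_inv := by rintro ⟨d, i⟩; simp
  right_inv := by rintro ⟨d, i⟩; simp

/-- The imprimitive wreath product `Y ≀ H` of permutation groups, as a permutation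
group on `Δ × ι`.  (The defining set is already a subgroup, so taking the
subgroup closure does not change it.) -/
def wreathProduct {Δ ι : Type*} (Y : Subgroup (Equiv.Perm Δ))
    (H : Subgroup (Equiv.Perm ι)) : Subgroup (Equiv.Perm (Δ × ι)) :=
  Subgroup.closure {σ | ∃ (g : ι → Equiv.Perm Δ) (h : Equiv.Perm ι),
    (∀ i, g i ∈ Y) ∧ h ∈ H ∧ σ = wreathPerm g h}

/-- The copy `X^ι` of a power of `X` inside the base group of a wreath product,
as a permutation group on `Δ × ι`. -/
def basePower {Δ ι : Type*} (X : Subgroup (Equiv.Perm Δ)) :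
    Subgroup (Equiv.Perm (Δ × ι)) :=
  Subgroup.closure {σ | ∃ g : ι → Equiv.Perm Δ, (∀ i, g i ∈ X) ∧ σ = wreathPerm g 1}

/-- Transport of permutations along a bijection, as a group isomorphism. -/
def permMapEquiv {α β : Type*} (f : α ≃ β) : Equiv.Perm α ≃* Equiv.Perm β where
  toFun g := (f.symm.trans g).trans f
  invFun g := (f.trans g).trans f.symm
  left_inv g := by ext x; simp
  right_inv g := by ext x; simp
  map_mul' g₁ g₂ := by ext x; simp [Equiv.Perm.mul_apply]

/-- Transport of a permutation group along a bijection of the underlying sets.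
`mapPermGroup f G` is the permutation group on `β` corresponding to `G` under the
relabelling `f`; thus `G` and `mapPermGroup f G` are permutation isomorphic. -/
def mapPermGroup {α β : Type*} (f : α ≃ β) (G : Subgroup (Equiv.Perm α)) :
    Subgroup (Equiv.Perm β) :=
  Subgroup.map (permMapEquiv f).toMonoidHom G

/-- The subgroup of the permutations of `Δ × ι` fixing every point whose second
coordinate is different from `i0`. -/
def fixAway {Δ ι : Type*} (i0 : ι) : Subgroup (Equiv.Perm (Δ × ι)) where
  carrier := {σ | ∀ x : Δ × ι, x.2 ≠ i0 → σ x = x}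
  one_mem' := by intro x _; rfl
  mul_mem' := by
    intro a b ha hb x hx
    simp only [Set.mem_setOf_eq] at *
    rw [Equiv.Perm.mul_apply, hb x hx, ha x hx]
  inv_mem' := by
    intro a ha x hx
    apply a.injective
    simpa using (ha x hx).symm

/-- The copy of the group `X` acting on the fibre `Δ × {i0}` of `Δ × ι`, fixing
all other points. -/
def atCoord {Δ ι : Type*} [DecidableEq ι] (i0 : ι) (X : Subgroup (Equiv.Perm Δ)) :
    Subgroup (Equiv.Perm (Δ × ι)) :=
  Subgroup.closure {σ | ∃ g ∈ X, σ = wreathPerm (fun i => if i = i0 then g else 1) 1}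

/-- Condition (C) of Table 1: the pointwise stabiliser (inside `G'`) of all the points
whose second coordinate is different from `i0` is permutation isomorphic to `X`
(acting on the fibre above `i0`). -/
def condC {Δ : Type*} {ι : Type*} [DecidableEq ι] (G' : Subgroup (Equiv.Perm (Δ × ι)))
    (i0 : ι) (X : Subgroup (Equiv.Perm Δ)) : Prop :=
  ∃ c : Δ ≃ Δ, G' ⊓ fixAway i0 = atCoord i0 (mapPermGroup c X)

/-- The full wreath product `C₂ ≀ Sym(m)` acting on `Fin 2 × Fin m` (the set
`{1, -1, …, m, -m}`), where the `i`-th base coordinate swaps `(0,i)` and `(1,i)`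
and `Sym(m)` permutes the pairs. -/
def fullC2Wreath (m : ℕ) : Subgroup (Equiv.Perm (Fin 2 × Fin m)) :=
  Subgroup.closure {σ | ∃ (g : Fin m → Equiv.Perm (Fin 2)) (h : Equiv.Perm (Fin m)),
    σ = wreathPerm g h}

/-- The subgroup `{1} × Sym(m)` of `C₂ ≀ Sym(m)`. -/
def symPart (m : ℕ) : Subgroup (Equiv.Perm (Fin 2 × Fin m)) :=
  Subgroup.closure {σ | ∃ h : Equiv.Perm (Fin m), σ = wreathPerm (fun _ => 1) h}

/-- The superflip `τ`: the base-group element swapping `i` and `-i` for every `i`. -/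
def superflip (m : ℕ) : Equiv.Perm (Fin 2 × Fin m) :=
  wreathPerm (fun _ => Equiv.swap 0 1) 1

/-- The subgroup `⟨τ⟩ × Sym(m)` of `C₂ ≀ Sym(m)`. -/
def flipSym (m : ℕ) : Subgroup (Equiv.Perm (Fin 2 × Fin m)) :=
  Subgroup.zpowers (superflip m) ⊔ symPart m

/-- The augmentation subgroup `(C₂^m)⁺ × {1}` of the base group of `C₂ ≀ Sym(m)`:
tuples with an even number of non-trivial entries. -/
def evenBase (m : ℕ) : Subgroup (Equiv.Perm (Fin 2 × Fin m)) :=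
  Subgroup.closure {σ | ∃ g : Fin m → Equiv.Perm (Fin 2),
    Even (Finset.univ.filter (fun i => g i ≠ 1)).card ∧ σ = wreathPerm g 1}

/-- The subgroup `(C₂^m)⁺ ⋊ Sym(m)` of `C₂ ≀ Sym(m)`. -/
def evenWreath (m : ℕ) : Subgroup (Equiv.Perm (Fin 2 × Fin m)) :=
  evenBase m ⊔ symPart m

/-- The full automorphism group of a graph, as a subgroup of the symmetric group on
its vertex set. -/
def autGroup {V : Type*} (Γ : SimpleGraph V) : Subgroup (Equiv.Perm V) where
  carrier := {σ | ∀ u v : V, Γ.Adj (σ u) (σ v) ↔ Γ.Adj u v}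
  one_mem' := by intro u v; rfl
  mul_mem' := by
    intro a b ha hb u v
    simp only [Set.mem_setOf_eq] at *
    rw [Equiv.Perm.mul_apply, Equiv.Perm.mul_apply, ha, hb]
  inv_mem' := by
    intro a ha u v
    simp only [Set.mem_setOf_eq] at *
    have h := ha (a⁻¹ u) (a⁻¹ v)
    simp at h
    exact h.symm

/-- A partition of the ground set into sets of size two. -/
def IsPairPartition {Ω : Type*} (P : Set (Set Ω)) : Prop :=
  (∀ B ∈ P, B.ncard = 2) ∧ ∀ ω : Ω, ∃! B, B ∈ P ∧ ω ∈ B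

/-- The graph `Inf_{λ,κ}(Σ, P, m)`: the vertex set is `VΣ × {1, …, m}` and
`(α,i) ∼ (β,j)` iff `{α,β} ∉ P` and `α ∼ β` in `Σ`; or `{α,β} ∈ P`, `λ = 1` and
`i = j`; or `{α,β} ∈ P`, `λ = 0` and `i ≠ j`; or `α = β` and `κ = 1` (and the two
vertices are distinct). -/
def infGraph {Ω : Type*} (Sg : SimpleGraph Ω) (P : Set (Set Ω)) (m : ℕ)
    (lam kap : ZMod 2) : SimpleGraph (Ω × Fin m) :=
  SimpleGraph.fromRel (fun x y =>
    (({x.1, y.1} : Set Ω) ∉ P ∧ Sg.Adj x.1 y.1) ∨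
    (({x.1, y.1} : Set Ω) ∈ P ∧ lam = 1 ∧ x.2 = y.2) ∨
    (({x.1, y.1} : Set Ω) ∈ P ∧ lam = 0 ∧ x.2 ≠ y.2) ∨
    (x.1 = y.1 ∧ kap = 1))

/-- A bijection of the vertices preserves the partition `P`. -/
def PreservesPartition {Ω : Type*} (P : Set (Set Ω)) (e : Ω ≃ Ω) : Prop :=
  ∀ B : Set Ω, B ∈ P ↔ (e '' B) ∈ P

/-- The group `Aut_P(Σ)` of automorphisms of `Σ` preserving the partition `P` acts
transitively on the vertices. -/
def IsPTransitive {Ω : Type*} (Sg : SimpleGraph Ω) (P : Set (Set Ω)) : Prop :=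
  ∀ u v : Ω, ∃ e : Sg ≃g Sg, PreservesPartition P e.toEquiv ∧ e u = v

/-- The 5-cycle `C₅`, as a graph on `ZMod 5`. -/
def C5 : SimpleGraph (ZMod 5) := SimpleGraph.fromRel (fun x y => x - y = 1)

/-- The perfect matching `m K₂` on the vertex set `Fin 2 × Fin m`. -/
def matching (m : ℕ) : SimpleGraph (Fin 2 × Fin m) :=
  SimpleGraph.fromRel (fun x y => x.2 = y.2 ∧ x.1 ≠ y.1)

/-- The Cartesian product `K_m □ K₂` on the vertex set `Fin 2 × Fin m`. -/
def prism (m : ℕ) : SimpleGraph (Fin 2 × Fin m) :=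
  SimpleGraph.fromRel (fun x y => (x.2 = y.2 ∧ x.1 ≠ y.1) ∨ (x.1 = y.1 ∧ x.2 ≠ y.2))

/-- The complete bipartite graph `K_{m,m}` on the vertex set `Fin 2 × Fin m`. -/
def completeBip (m : ℕ) : SimpleGraph (Fin 2 × Fin m) :=
  SimpleGraph.fromRel (fun x y => x.1 ≠ y.1)

/-- The quotient graph `Γ/H` of a graph by a group of automorphisms: the vertices
are the `H`-orbits, two distinct orbits being adjacent whenever some vertex of one is
adjacent in `Γ` to some vertex of the other. -/
def quotGraph {V : Type*} (Γ : SimpleGraph V) (H : Subgroup (Equiv.Perm V)) :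
    SimpleGraph (Quotient (MulAction.orbitRel H V)) :=
  SimpleGraph.fromRel (fun A B => ∃ u v : V,
    Quotient.mk (MulAction.orbitRel H V) u = A ∧
    Quotient.mk (MulAction.orbitRel H V) v = B ∧ Γ.Adj u v)

/-- The block `D_j = {1, -1, …, m, -m} × {j}` of the vertex set. -/
def Dblock (m k : ℕ) (j : Fin k) : Set ((Fin 2 × Fin m) × Fin k) := {v | v.2 = j}

/-- The partition `𝓓/X^k` of the vertices of the quotient graph: the `j`-th block
consists of the orbits of the vertices with second coordinate `j`. -/
def quotPart (m k : ℕ) (H : Subgroup (Equiv.Perm ((Fin 2 × Fin m) × Fin k))) :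
    Set (Set (Quotient (MulAction.orbitRel H ((Fin 2 × Fin m) × Fin k)))) :=
  {S | ∃ j : Fin k, S = {q | ∃ w : Fin 2 × Fin m,
    q = Quotient.mk (MulAction.orbitRel H ((Fin 2 × Fin m) × Fin k)) (w, j)}}

/-!
Since `X^k ≤ Aut Γ`, adjacency inside a fibre `D_j` depends only on the two rows and on whether
the columns agree, and adjacency between two fibres depends only on the rows.
Vertex-transitivity inside `Y ≀ Sym(k)` moves every fibre onto every other by a uniform
permutation of the rows, so all fibres carry one graph, invariant under `Sym(2) × Sym(m)`.
Condition (C) makes its two edge classes between the rows (equal columns, different columns)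
complementary: otherwise permuting the columns of one row alone would be an automorphism
supported on one fibre and outside `X`. Hence every fibre is `blockGraph m λ κ`, which is
`mK₂`, `K_m □ K₂` or one of their complements, and `v ↦ (X^k-orbit of v, column of v)` is an
isomorphism `Γ ≅ Inf_{λ,κ}(Γ/X^k, 𝓓/X^k, m)`. The isomorphism type of the fibre fixes `(λ,κ)`
through the degree, except that `κ` is invisible for `m = 1` and `λ` for `m = 2`; in the latter
case shifting the column by the row gives `Inf_{λ,κ} ≅ Inf_{λ+1,κ}`.

A transposition of `Γ/X^k` preserving `𝓓/X^k` must exchange the two orbits of a single fibre,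
so it lifts to the automorphism of `Γ` flipping the rows of that fibre. Conjugated to the fibre
over `0` (the paper's `D₁`) this is an automorphism fixing all other fibres that is not in `X`,
contradicting (C).
-/

lemma Subgroup.mem_closure_iff_of_closed {G : Type*} [Group G] {S : Set G}
    (one_mem : 1 ∈ S) (mul_mem : ∀ a ∈ S, ∀ b ∈ S, a * b ∈ S) (inv_mem : ∀ a ∈ S, a⁻¹ ∈ S)
    {x : G} :
    x ∈ Subgroup.closure S ↔ x ∈ S := by
  let K : Subgroup G :=
    { carrier := S
      one_mem' := one_mem
      mul_mem' := fun ha hb => mul_mem _ ha _ hb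
      inv_mem' := fun ha => inv_mem _ ha }
  exact ⟨fun hx => (Subgroup.closure_le K).2 subset_rfl hx, (Subgroup.subset_closure ·)⟩

section WreathPerm

variable {Δ ι : Type*}

@[simp] lemma wreathPerm_apply (g : ι → Perm Δ) (h : Perm ι) (x : Δ × ι) :
    wreathPerm g h x = (g x.2 x.1, h x.2) := rfl

lemma wreathPerm_mul (g g' : ι → Perm Δ) (h h' : Perm ι) :
    wreathPerm g h * wreathPerm g' h' = wreathPerm (fun i => g (h' i) * g' i) (h * h') := by
  ext x <;> rfl

lemma wreathPerm_one : wreathPerm (fun _ : ι => (1 : Perm Δ)) 1 = 1 := rfl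

lemma wreathPerm_inv (g : ι → Perm Δ) (h : Perm ι) :
    (wreathPerm g h)⁻¹ = wreathPerm (fun i => (g (h⁻¹ i))⁻¹) h⁻¹ := by
  ext x <;> rfl

lemma mem_wreathProduct {Y : Subgroup (Perm Δ)} {H : Subgroup (Perm ι)} {σ : Perm (Δ × ι)} :
    σ ∈ wreathProduct Y H ↔
      ∃ (g : ι → Perm Δ) (h : Perm ι), (∀ i, g i ∈ Y) ∧ h ∈ H ∧ σ = wreathPerm g h := by
  apply Subgroup.mem_closure_iff_of_closed
  · exact ⟨fun _ => 1, 1, fun _ => one_mem Y, one_mem H, wreathPerm_one.symm⟩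
  · rintro _ ⟨g, h, hg, hh, rfl⟩ _ ⟨g', h', hg', hh', rfl⟩
    exact ⟨_, _, fun i => mul_mem (hg _) (hg' i), mul_mem hh hh', wreathPerm_mul g g' h h'⟩
  · rintro _ ⟨g, h, hg, hh, rfl⟩
    exact ⟨_, _, fun i => inv_mem (hg _), inv_mem hh, wreathPerm_inv g h⟩

lemma mem_basePower {X : Subgroup (Perm Δ)} {σ : Perm (Δ × ι)} :
    σ ∈ (basePower X : Subgroup (Perm (Δ × ι))) ↔
      ∃ g : ι → Perm Δ, (∀ i, g i ∈ X) ∧ σ = wreathPerm g 1 := by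
  apply Subgroup.mem_closure_iff_of_closed
  · exact ⟨fun _ => 1, fun _ => one_mem X, wreathPerm_one.symm⟩
  · rintro _ ⟨g, hg, rfl⟩ _ ⟨g', hg', rfl⟩
    exact ⟨_, fun i => mul_mem (hg i) (hg' i), wreathPerm_mul g g' 1 1⟩
  · rintro _ ⟨g, hg, rfl⟩
    exact ⟨_, fun i => inv_mem (hg i), wreathPerm_inv g 1⟩

def onFibre [DecidableEq ι] (i₀ : ι) (g : Perm Δ) : Perm (Δ × ι) :=
  wreathPerm (fun i => if i = i₀ then g else 1) 1

lemma onFibre_apply_of_eq [DecidableEq ι] {i₀ : ι} (g : Perm Δ) {x : Δ × ι}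
    (hx : x.2 = i₀) :
    onFibre i₀ g x = (g x.1, x.2) := by
  simp [onFibre, hx]

lemma onFibre_apply_of_ne [DecidableEq ι] {i₀ : ι} (g : Perm Δ) {x : Δ × ι}
    (hx : x.2 ≠ i₀) :
    onFibre i₀ g x = x := by
  simp [onFibre, hx]

lemma onFibre_injective [DecidableEq ι] (i₀ : ι) :
    Function.Injective (onFibre i₀ : Perm Δ → Perm (Δ × ι)) := fun g g' h => by
  ext d
  simpa [onFibre_apply_of_eq] using congrArg Prod.fst (Equiv.congr_fun h (d, i₀))

lemma mem_atCoord [DecidableEq ι] {X : Subgroup (Perm Δ)} {i₀ : ι} {σ : Perm (Δ × ι)} :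
    σ ∈ atCoord i₀ X ↔ ∃ g ∈ X, σ = onFibre i₀ g := by
  apply Subgroup.mem_closure_iff_of_closed
  · refine ⟨1, one_mem X, ?_⟩
    ext x <;> by_cases hx : x.2 = i₀ <;> simp [hx]
  · rintro _ ⟨g, hg, rfl⟩ _ ⟨g', hg', rfl⟩
    refine ⟨g * g', mul_mem hg hg', ?_⟩
    ext x <;> by_cases hx : x.2 = i₀ <;> simp [hx]
  · rintro _ ⟨g, hg, rfl⟩
    refine ⟨g⁻¹, inv_mem hg, ?_⟩
    ext x <;> by_cases hx : x.2 = i₀ <;> simp [hx, wreathPerm_inv]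

lemma onFibre_mem_fixAway [DecidableEq ι] (i₀ : ι) (g : Perm Δ) :
    onFibre i₀ g ∈ (fixAway i₀ : Subgroup (Perm (Δ × ι))) :=
  fun _ hx => onFibre_apply_of_ne g hx

lemma onFibre_conj [DecidableEq ι] (g : ι → Perm Δ) (h : Perm ι) (i : ι) (f : Perm Δ) :
    (wreathPerm g h)⁻¹ * onFibre (h i) f * wreathPerm g h =
      onFibre i ((g i)⁻¹ * f * g i) := by
  ext x <;> by_cases hx : x.2 = i <;> simp [onFibre, hx, wreathPerm_inv, h.injective.eq_iff]

lemma wreathPerm_const (c : Perm Δ) (t : Perm ι) :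
    wreathPerm (fun _ => c) t = c.prodCongr t := by
  ext <;> rfl

lemma onFibre_mem_autGroup [DecidableEq ι] {Γ : SimpleGraph (Δ × ι)} {j : ι}
    {g : Perm Δ} (hin : ∀ x y, Γ.Adj (g x, j) (g y, j) ↔ Γ.Adj (x, j) (y, j))
    (hout : ∀ x v, v.2 ≠ j → (Γ.Adj (g x, j) v ↔ Γ.Adj (x, j) v)) :
    onFibre j g ∈ autGroup Γ := by
  rintro ⟨x, i⟩ ⟨y, i'⟩
  by_cases hi : i = j <;> by_cases hi' : i' = j
  · subst hi hi'
    simpa [onFibre_apply_of_eq] using hin x y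
  · subst hi
    simpa [onFibre_apply_of_eq, onFibre_apply_of_ne g (x := (y, i')) hi'] using hout x _ hi'
  · subst hi'
    simpa [onFibre_apply_of_eq, onFibre_apply_of_ne g (x := (x, i)) hi, Γ.adj_comm]
      using hout y _ hi
  · simp [onFibre_apply_of_ne g (x := (x, i)) hi, onFibre_apply_of_ne g (x := (y, i')) hi']

end WreathPerm

lemma mem_autGroup_of_iso {V : Type*} {Γ : SimpleGraph V} (e : Γ ≃g Γ) :
    (e.toEquiv : Perm V) ∈ autGroup Γ :=
  fun _ _ => e.map_rel_iff

lemma ZMod.exists_eq_one_iff_mod_two (P : Prop) : ∃ t : ZMod 2, (t = 1 ↔ P) := by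
  classical
  exact ⟨if P then 1 else 0, by split_ifs with h <;> simp [h]⟩

lemma ZMod.eq_zero_or_eq_one_mod_two (t : ZMod 2) : t = 0 ∨ t = 1 := by
  revert t; decide

lemma ZMod.eq_or_eq_add_one_mod_two (s t : ZMod 2) : t = s ∨ t = s + 1 := by
  revert s t; decide

lemma ZMod.eq_iff_eq_one_iff_mod_two {s t : ZMod 2} : s = t ↔ (s = 1 ↔ t = 1) := by
  revert s t; decide

lemma Equiv.Perm.exists_apply_eq_and_apply_eq {α : Type*} [DecidableEq α] {i i' j j' : α}
    (h : i = i' ↔ j = j') : ∃ s : Perm α, s i = j ∧ s i' = j' := by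
  refine ⟨swap (swap i j i') j' * swap i j, ?_, by simp⟩
  by_cases hi : i = i'
  · subst hi
    simp [h.1 rfl]
  · have hne : swap i j i' ≠ swap i j i := (swap i j).injective.ne (Ne.symm hi)
    rw [swap_apply_left] at hne
    simpa using swap_apply_of_ne_of_ne hne.symm (mt h.2 hi)

lemma Equiv.Perm.eq_of_apply_zero_eq_fin_two {c c' : Perm (Fin 2)} (h : c 0 = c' 0) :
    c = c' := by
  revert c c'; decide

section SymPart

variable {m : ℕ}

lemma mem_symPart {σ : Perm (Fin 2 × Fin m)} :
    σ ∈ symPart m ↔ ∃ s : Perm (Fin m), σ = (1 : Perm (Fin 2)).prodCongr s := by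
  simp_rw [← wreathPerm_const]
  apply Subgroup.mem_closure_iff_of_closed
  · exact ⟨1, rfl⟩
  · rintro _ ⟨s, rfl⟩ _ ⟨s', rfl⟩
    exact ⟨s * s', by ext <;> rfl⟩
  · rintro _ ⟨s, rfl⟩
    exact ⟨s⁻¹, by ext <;> rfl⟩

lemma exists_prodCongr_of_mem_flipSym {σ : Perm (Fin 2 × Fin m)} (hσ : σ ∈ flipSym m) :
    ∃ (c : Perm (Fin 2)) (t : Perm (Fin m)), σ = c.prodCongr t := by
  let K := Subgroup.closure
    {σ : Perm (Fin 2 × Fin m) | ∃ (c : Perm (Fin 2)) (t : Perm (Fin m)), σ = c.prodCongr t}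
  have hK : ∀ {σ}, σ ∈ K ↔
      ∃ (c : Perm (Fin 2)) (t : Perm (Fin m)), σ = c.prodCongr t := by
    apply Subgroup.mem_closure_iff_of_closed
    · exact ⟨1, 1, rfl⟩
    · rintro _ ⟨c, t, rfl⟩ _ ⟨c', t', rfl⟩
      exact ⟨c * c', t * t', by ext <;> rfl⟩
    · rintro _ ⟨c, t, rfl⟩
      exact ⟨c⁻¹, t⁻¹, by ext <;> rfl⟩
  refine hK.1 ((sup_le ?_ ?_ : flipSym m ≤ K) hσ)
  · exact Subgroup.zpowers_le.2 (hK.2 ⟨_, _, wreathPerm_const _ _⟩)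
  · refine (Subgroup.closure_le K).2 ?_
    rintro _ ⟨s, rfl⟩
    exact hK.2 ⟨_, _, wreathPerm_const _ _⟩

lemma prodCongr_conj_mem_symPart {σ : Perm (Fin 2 × Fin m)} (hσ : σ ∈ symPart m)
    (c : Perm (Fin 2)) (t : Perm (Fin m)) :
    c.prodCongr t * σ * (c.prodCongr t)⁻¹ ∈ symPart m := by
  obtain ⟨s, rfl⟩ := mem_symPart.1 hσ
  exact mem_symPart.2 ⟨t * s * t⁻¹, by ext <;> simp⟩

lemma superflip_not_mem_symPart (i : Fin m) : superflip m ∉ symPart m := by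
  intro h
  obtain ⟨s, hs⟩ := mem_symPart.1 h
  have := congrArg Prod.fst (Equiv.congr_fun hs (0, i))
  simp [superflip] at this

end SymPart

/-- The graph that `Inf_{λ,κ}(Σ, P, m)` induces over a pair of `P`, with the two vertices of
the pair as rows: rows are joined within equal columns if `λ = 1` and within different columns
if `λ = 0`, and each row is a clique if `κ = 1`. -/
def blockGraph (m : ℕ) (lam kap : ZMod 2) : SimpleGraph (Fin 2 × Fin m) :=
  SimpleGraph.fromRel fun x y =>
    (x.1 ≠ y.1 ∧ (x.2 = y.2 ↔ lam = 1)) ∨ (x.1 = y.1 ∧ kap = 1)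

section BlockGraph

variable {m : ℕ} {lam kap : ZMod 2}

lemma blockGraph_adj {x y : Fin 2 × Fin m} :
    (blockGraph m lam kap).Adj x y ↔
      x ≠ y ∧ ((x.1 ≠ y.1 ∧ (x.2 = y.2 ↔ lam = 1)) ∨ (x.1 = y.1 ∧ kap = 1)) := by
  simp only [blockGraph, SimpleGraph.fromRel_adj, ne_eq, eq_comm (a := y.1),
    eq_comm (a := y.2)]
  tauto

instance : DecidableRel (blockGraph m lam kap).Adj :=
  fun _ _ => decidable_of_iff _ blockGraph_adj.symm

lemma blockGraph_degree (x : Fin 2 × Fin m) :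
    (blockGraph m lam kap).degree x =
      (if lam = 1 then 1 else m - 1) + (if kap = 1 then m - 1 else 0) := by
  rw [← SimpleGraph.card_neighborFinset_eq_degree]
  obtain ⟨a, i⟩ := x
  rw [SimpleGraph.neighborFinset_eq_filter]
  simp only [blockGraph_adj]
  rw [Finset.card_filter, Fintype.sum_prod_type, Fin.sum_univ_two]
  simp only [← Finset.card_filter]
  by_cases hl : lam = 1 <;> by_cases hk : kap = 1 <;> fin_cases a <;>
    simp [hl, hk, Prod.ext_iff] <;>
    simp only [← ne_eq, Finset.filter_ne, Finset.filter_eq, Finset.mem_univ, if_true,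
      Finset.card_erase_of_mem, Finset.card_singleton, Finset.card_univ, Fintype.card_fin]
  all_goals omega

lemma matching_eq_blockGraph : matching m = blockGraph m 1 0 := by
  ext x y
  simp only [matching, SimpleGraph.fromRel_adj, blockGraph_adj]
  aesop

lemma prism_eq_blockGraph : prism m = blockGraph m 1 1 := by
  ext x y
  simp only [prism, SimpleGraph.fromRel_adj, blockGraph_adj]
  aesop

lemma compl_matching_eq_blockGraph : (matching m)ᶜ = blockGraph m 0 1 := by
  ext x y
  simp only [matching, SimpleGraph.compl_adj, SimpleGraph.fromRel_adj, blockGraph_adj]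
  simp only [ne_eq, Prod.ext_iff, not_and, not_or, Decidable.not_not, zero_ne_one, iff_false,
    and_true, and_congr_right_iff]
  tauto

lemma compl_prism_eq_blockGraph : (prism m)ᶜ = blockGraph m 0 0 := by
  ext x y
  simp only [prism, SimpleGraph.compl_adj, SimpleGraph.fromRel_adj, blockGraph_adj]
  aesop

lemma blockGraph_cases (lam kap : ZMod 2) :
    blockGraph m lam kap = matching m ∨ blockGraph m lam kap = prism m ∨
      blockGraph m lam kap = (matching m)ᶜ ∨ blockGraph m lam kap = (prism m)ᶜ := by
  rw [compl_matching_eq_blockGraph, compl_prism_eq_blockGraph, matching_eq_blockGraph,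
    prism_eq_blockGraph]
  rcases ZMod.eq_zero_or_eq_one_mod_two lam with rfl | rfl <;>
    rcases ZMod.eq_zero_or_eq_one_mod_two kap with rfl | rfl <;> simp

/-- The degree recovers `κ` unless `m = 1` and `λ` unless `m = 2`. -/
lemma blockGraph_params_of_iso {lam' kap' : ZMod 2}
    (e : blockGraph m lam kap ≃g blockGraph m lam' kap') :
    m = 0 ∨ (m = 1 ∧ lam = lam') ∨ (m = 2 ∧ kap = kap') ∨
      (lam = lam' ∧ kap = kap') := by
  rcases Nat.eq_zero_or_pos m with hm | hm
  · exact Or.inl hm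
  have hdeg := e.degree_eq (0, ⟨0, hm⟩)
  rw [blockGraph_degree, blockGraph_degree] at hdeg
  rw [ZMod.eq_iff_eq_one_iff_mod_two, ZMod.eq_iff_eq_one_iff_mod_two (s := kap)]
  by_cases hl : lam = 1 <;> by_cases hk : kap = 1 <;> by_cases hl' : lam' = 1 <;>
    by_cases hk' : kap' = 1 <;> simp [hl, hk, hl', hk'] at hdeg ⊢ <;>
    omega

lemma adj_iff_of_forall_prodCongr {G : SimpleGraph (Fin 2 × Fin m)}
    (hinv : ∀ (c : Perm (Fin 2)) (s : Perm (Fin m)) x y,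
      G.Adj (c.prodCongr s x) (c.prodCongr s y) ↔ G.Adj x y)
    (x y x' y' : Fin 2 × Fin m) (h₁ : x.1 = y.1 ↔ x'.1 = y'.1)
    (h₂ : x.2 = y.2 ↔ x'.2 = y'.2) :
    G.Adj x y ↔ G.Adj x' y' := by
  obtain ⟨c, hc, hc'⟩ := Perm.exists_apply_eq_and_apply_eq h₁
  obtain ⟨s, hs, hs'⟩ := Perm.exists_apply_eq_and_apply_eq h₂
  have hx : c.prodCongr s x = x' := Prod.ext hc hs
  have hy : c.prodCongr s y = y' := Prod.ext hc' hs'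
  rw [← hinv c s x y, hx, hy]

lemma exists_eq_blockGraph {G : SimpleGraph (Fin 2 × Fin m)}
    (hinv : ∀ (c : Perm (Fin 2)) (s : Perm (Fin m)) x y,
      G.Adj (c.prodCongr s x) (c.prodCongr s y) ↔ G.Adj x y)
    (hpair : ∀ i i', i ≠ i' → (G.Adj (0, i) (1, i) ↔ ¬ G.Adj (0, i) (1, i'))) :
    ∃ lam kap, G = blockGraph m lam kap := by
  have horbit := adj_iff_of_forall_prodCongr hinv
  obtain ⟨lam, hlam⟩ := ZMod.exists_eq_one_iff_mod_two (∃ i, G.Adj (0, i) (1, i))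
  obtain ⟨kap, hkap⟩ := ZMod.exists_eq_one_iff_mod_two (∃ i i', G.Adj (0, i) (0, i'))
  refine ⟨lam, kap, SimpleGraph.ext <| funext₂ fun x y => propext ?_⟩
  rw [blockGraph_adj, hlam, hkap]
  by_cases hrow : x.1 = y.1
  · have hcol : x ≠ y ↔ x.2 ≠ y.2 := by simp [Prod.ext_iff, hrow]
    simp only [hrow, hcol, ne_eq, not_true_eq_false, false_and, true_and, false_or]
    constructor
    · intro h
      have hne : x.2 ≠ y.2 := fun h' => G.ne_of_adj h (Prod.ext hrow h')
      exact ⟨hne, x.2, y.2, (horbit x y (0, x.2) (0, y.2) (by simp [hrow]) Iff.rfl).1 h⟩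
    · rintro ⟨hne, i, i', h⟩
      have hii : i ≠ i' := fun h' => G.ne_of_adj h (by rw [h'])
      exact (horbit _ _ _ _ (by simp [hrow]) (by simp [hii, hne])).1 h
  have hne : x ≠ y := fun h => hrow (by rw [h])
  have hsame : (∃ i, G.Adj (0, i) (1, i)) ↔ G.Adj (0, x.2) (1, x.2) :=
    ⟨fun ⟨i, h⟩ => (horbit (0, i) (1, i) (0, x.2) (1, x.2) Iff.rfl (by simp)).1 h,
      fun h => ⟨_, h⟩⟩
  have hxy : G.Adj x y ↔ G.Adj (0, x.2) (1, y.2) := horbit _ _ _ _ (by simp [hrow]) Iff.rfl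
  simp only [hne, hrow, hsame, hxy, ne_eq, not_false_eq_true, true_and, false_and, or_false]
  by_cases hcol : x.2 = y.2
  · simp [hcol]
  · simp only [hcol, false_iff]
    rw [hpair x.2 y.2 hcol, not_not]

end BlockGraph

section InfGraph

variable {Ω : Type*} (Sg : SimpleGraph Ω) (P : Set (Set Ω)) {m : ℕ} {lam kap : ZMod 2}

lemma infGraph_adj {x y : Ω × Fin m} :
    (infGraph Sg P m lam kap).Adj x y ↔ x ≠ y ∧
      ((({x.1, y.1} : Set Ω) ∉ P ∧ Sg.Adj x.1 y.1) ∨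
        (({x.1, y.1} : Set Ω) ∈ P ∧ (x.2 = y.2 ↔ lam = 1)) ∨ (x.1 = y.1 ∧ kap = 1)) := by
  have hlam : lam = 0 ↔ ¬lam = 1 := by revert lam; decide
  simp only [infGraph, SimpleGraph.fromRel_adj, Set.pair_comm y.1, hlam, eq_comm (a := y.1),
    eq_comm (a := y.2), Sg.adj_comm y.1]
  tauto

lemma infGraph_one_eq (kap' : ZMod 2) :
    infGraph Sg P 1 lam kap = infGraph Sg P 1 lam kap' := by
  ext x y
  have hxy : x.1 = y.1 → x = y := fun h => Prod.ext h (Subsingleton.elim _ _)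
  simp only [infGraph_adj]
  tauto

/-- For `m = 2`, shifting the second coordinate by a 2-colouring `χ` of the pairs in `P`
exchanges the two values of `λ`. -/
lemma nonempty_infGraph_two_iso_add_one (χ : Ω → Fin 2)
    (hχ : ∀ α β, ({α, β} : Set Ω) ∈ P → χ α ≠ χ β) :
    Nonempty (infGraph Sg P 2 lam kap ≃g infGraph Sg P 2 (lam + 1) kap) := by
  refine ⟨⟨Equiv.prodShear (Equiv.refl Ω) fun α => Equiv.addRight (χ α), ?_⟩⟩
  rintro ⟨α, i⟩ ⟨β, i'⟩
  simp only [Equiv.prodShear_apply, Equiv.refl_apply, Equiv.coe_addRight, infGraph_adj]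
  by_cases hP : ({α, β} : Set Ω) ∈ P
  · have hαβ : α ≠ β := fun h => hχ α β hP (by rw [h])
    have hshift : i + χ α = i' + χ β ↔ i ≠ i' := by
      have key : ∀ a b c d : Fin 2, c ≠ d → (a + c = b + d ↔ a ≠ b) := by decide
      exact key i i' _ _ (hχ α β hP)
    have hlam : lam + 1 = 1 ↔ lam ≠ 1 := by revert lam; decide
    simp only [hP, hαβ, hshift, hlam, ne_eq, Prod.mk.injEq, false_and, not_false_eq_true,
      true_and, not_true_eq_false, false_or, or_false]
    tauto
  · by_cases hαβ : α = β
    · subst hαβ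
      rw [Set.pair_eq_singleton] at hP
      simp [hP]
    · simp [hP, hαβ]

lemma nonempty_infGraph_iso_of_blockGraph_iso (χ : Ω → Fin 2)
    (hχ : ∀ α β, ({α, β} : Set Ω) ∈ P → χ α ≠ χ β) {lam' kap' : ZMod 2}
    (e : blockGraph m lam kap ≃g blockGraph m lam' kap') :
    Nonempty (infGraph Sg P m lam kap ≃g infGraph Sg P m lam' kap') := by
  rcases blockGraph_params_of_iso e with rfl | ⟨rfl, rfl⟩ | ⟨rfl, rfl⟩ | ⟨rfl, rfl⟩
  · exact ⟨⟨Equiv.equivOfIsEmpty _ _, fun {x} => isEmptyElim x⟩⟩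
  · rw [infGraph_one_eq Sg P (kap := kap) kap']
    exact ⟨SimpleGraph.Iso.refl⟩
  · rcases ZMod.eq_or_eq_add_one_mod_two lam lam' with rfl | rfl
    · exact ⟨SimpleGraph.Iso.refl⟩
    · exact nonempty_infGraph_two_iso_add_one Sg P χ hχ
  · exact ⟨SimpleGraph.Iso.refl⟩

end InfGraph
section Fibres

variable {m k : ℕ} {Γ : SimpleGraph ((Fin 2 × Fin m) × Fin k)}

lemma adj_colPerm_iff (hlow : basePower (symPart m) ≤ autGroup Γ) (s : Fin k → Perm (Fin m))
    (a b : Fin 2) (i i' : Fin m) (j j' : Fin k) :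
    Γ.Adj ((a, s j i), j) ((b, s j' i'), j') ↔ Γ.Adj ((a, i), j) ((b, i'), j') :=
  hlow (mem_basePower.2 ⟨fun j => (1 : Perm (Fin 2)).prodCongr (s j),
    fun j => mem_symPart.2 ⟨s j, rfl⟩, rfl⟩) ((a, i), j) ((b, i'), j')

lemma adj_congr_cols_of_ne (hlow : basePower (symPart m) ≤ autGroup Γ) {j j' : Fin k}
    (hj : j ≠ j') (a b : Fin 2) (i i' i₂ i₂' : Fin m) :
    Γ.Adj ((a, i), j) ((b, i'), j') ↔ Γ.Adj ((a, i₂), j) ((b, i₂'), j') := by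
  have := adj_colPerm_iff hlow (Function.update (fun _ => swap i' i₂') j (swap i i₂))
    a b i i' j j'
  rw [Function.update_self, Function.update_of_ne hj.symm, swap_apply_left,
    swap_apply_left] at this
  exact this.symm

lemma exists_wreathPerm_prodCongr_of_mem_autGroup
    (hhigh : autGroup Γ ≤ wreathProduct (flipSym m) (⊤ : Subgroup (Perm (Fin k))))
    {σ : Perm ((Fin 2 × Fin m) × Fin k)} (hσ : σ ∈ autGroup Γ) :
    ∃ (c : Fin k → Perm (Fin 2)) (t : Fin k → Perm (Fin m)) (h : Perm (Fin k)),
      σ = wreathPerm (fun j => (c j).prodCongr (t j)) h := by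
  obtain ⟨g, h, hg, -, rfl⟩ := mem_wreathProduct.1 (hhigh hσ)
  choose c t hct using fun j => exists_prodCongr_of_mem_flipSym (hg j)
  exact ⟨c, t, h, by simp_rw [← hct]⟩

/-- Vertex-transitivity inside `Y ≀ Sym(k)` carries any fibre onto any other by a uniform
permutation of the rows; `X^k` supplies the permutations of the columns. -/
lemma adj_prodCongr_iff (hvt : IsVertexTransitive Γ)
    (hlow : basePower (symPart m) ≤ autGroup Γ)
    (hhigh : autGroup Γ ≤ wreathProduct (flipSym m) (⊤ : Subgroup (Perm (Fin k))))
    (c : Perm (Fin 2)) (s : Perm (Fin m)) (j j' : Fin k) (x y : Fin 2 × Fin m) :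
    Γ.Adj (c.prodCongr s x, j') (c.prodCongr s y, j') ↔ Γ.Adj (x, j) (y, j) := by
  obtain ⟨a, i⟩ := x
  obtain ⟨b, i'⟩ := y
  obtain ⟨e, he⟩ := hvt ((0, i), j) ((c 0, i), j')
  obtain ⟨cc, t, h, hσ⟩ :=
    exists_wreathPerm_prodCongr_of_mem_autGroup hhigh (mem_autGroup_of_iso e)
  have hE : ∀ u, e u = wreathPerm (fun j => (cc j).prodCongr (t j)) h u := fun u => by
    rw [← hσ]; rfl
  rw [hE] at he
  simp only [wreathPerm_apply, prodCongr_apply, Prod.map, Prod.mk.injEq] at he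
  obtain ⟨⟨hc, -⟩, hh⟩ := he
  have key := e.map_rel_iff (a := ((a, i), j)) (b := ((b, i'), j))
  rw [hE, hE] at key
  simp only [wreathPerm_apply, prodCongr_apply, Prod.map, hh,
    Perm.eq_of_apply_zero_eq_fin_two hc] at key
  rw [← key]
  simpa using adj_colPerm_iff hlow (fun _ => s * (t j)⁻¹) (c a) (c b) (t j i) (t j i') j' j'

end Fibres

section Stabiliser

variable {m k : ℕ} [NeZero k] {Γ : SimpleGraph ((Fin 2 × Fin m) × Fin k)}

/-- Condition (C) at the fibre over `0` transfers to every fibre, by conjugating with an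
automorphism that carries the fibre over `0` to the given one. -/
lemma mem_symPart_of_onFibre_mem_autGroup (hvt : IsVertexTransitive Γ)
    (hhigh : autGroup Γ ≤ wreathProduct (flipSym m) (⊤ : Subgroup (Perm (Fin k))))
    (hstab : autGroup Γ ⊓ fixAway (0 : Fin k) = atCoord (0 : Fin k) (symPart m))
    (j : Fin k) {g : Perm (Fin 2 × Fin m)} (hg : onFibre j g ∈ autGroup Γ) :
    g ∈ symPart m := by
  rcases isEmpty_or_nonempty (Fin m) with hm | ⟨⟨i⟩⟩
  · rw [Subsingleton.elim g 1]
    exact one_mem _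
  obtain ⟨e, he⟩ := hvt ((0, i), 0) ((0, i), j)
  have hσ := mem_autGroup_of_iso e
  obtain ⟨c, t, h, hct⟩ := exists_wreathPerm_prodCongr_of_mem_autGroup hhigh hσ
  have hh : h 0 = j := congrArg Prod.snd ((Equiv.congr_fun hct _).symm.trans he)
  rw [hct] at hσ
  have hconj : onFibre 0 (((c 0).prodCongr (t 0))⁻¹ * g * (c 0).prodCongr (t 0)) ∈
      atCoord (0 : Fin k) (symPart m) := by
    refine hstab ▸ Subgroup.mem_inf.2 ⟨?_, onFibre_mem_fixAway _ _⟩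
    rw [← onFibre_conj (fun j => (c j).prodCongr (t j)), hh]
    exact mul_mem (mul_mem (inv_mem hσ) hg) hσ
  obtain ⟨g', hg', hgg'⟩ := mem_atCoord.1 hconj
  rw [← onFibre_injective _ hgg'] at hg'
  simpa [mul_assoc] using prodCongr_conj_mem_symPart hg' (c 0) (t 0)

/-- If the two edge classes between the rows of a fibre agreed, moving the columns of a single
row would be an automorphism supported on one fibre that does not lie in `X`. -/
lemma adj_zero_one_iff_not (hvt : IsVertexTransitive Γ)
    (hlow : basePower (symPart m) ≤ autGroup Γ)
    (hhigh : autGroup Γ ≤ wreathProduct (flipSym m) (⊤ : Subgroup (Perm (Fin k))))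
    (hstab : autGroup Γ ⊓ fixAway (0 : Fin k) = atCoord (0 : Fin k) (symPart m))
    {i i' : Fin m} (hii : i ≠ i') :
    Γ.Adj ((0, i), 0) ((1, i), 0) ↔ ¬Γ.Adj ((0, i), 0) ((1, i'), 0) := by
  by_contra hcon
  have hiff : Γ.Adj ((0, i), 0) ((1, i), 0) ↔ Γ.Adj ((0, i), 0) ((1, i'), 0) := by tauto
  have horbit := adj_iff_of_forall_prodCongr (G := Γ.comap fun x => (x, (0 : Fin k)))
    fun c s x y => adj_prodCongr_iff hvt hlow hhigh c s 0 0 x y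
  simp only [SimpleGraph.comap_adj] at horbit
  have hcross : ∀ x y : Fin 2 × Fin m, x.1 ≠ y.1 →
      (Γ.Adj (x, 0) (y, 0) ↔ Γ.Adj ((0, i), 0) ((1, i), 0)) := by
    intro x y hxy
    by_cases hcol : x.2 = y.2
    · exact horbit x y (0, i) (1, i) (by simp [hxy]) (by simp [hcol])
    · exact (horbit x y (0, i) (1, i') (by simp [hxy]) (by simp [hcol, hii])).trans hiff.symm
  let g : Perm (Fin 2 × Fin m) := prodShear (Equiv.refl _) (Pi.mulSingle 1 (swap i i'))
  have hg : onFibre 0 g ∈ autGroup Γ := by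
    refine onFibre_mem_autGroup (fun x y => ?_) (fun x v hv => ?_)
    · by_cases hxy : x.1 = y.1
      · refine horbit _ _ _ _ (by simp [g, hxy]) ?_
        simp [g, hxy]
      · exact (hcross _ _ (by simpa [g] using hxy)).trans (hcross _ _ hxy).symm
    · exact adj_congr_cols_of_ne hlow (Ne.symm hv) _ _ _ _ _ _
  obtain ⟨s, hs⟩ := mem_symPart.1 (mem_symPart_of_onFibre_mem_autGroup hvt hhigh hstab 0 hg)
  have h₀ := congrArg Prod.snd (Equiv.congr_fun hs (0, i))
  have h₁ := congrArg Prod.snd (Equiv.congr_fun hs (1, i))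
  simp only [g, prodShear_apply, refl_apply, prodCongr_apply, Prod.map_apply, Perm.coe_one, id_eq,
    Pi.mulSingle_eq_same, Pi.mulSingle_eq_of_ne zero_ne_one, swap_apply_left] at h₀ h₁
  exact hii (h₀.trans h₁.symm)

lemma exists_adj_fibre_iff_blockGraph (hvt : IsVertexTransitive Γ)
    (hlow : basePower (symPart m) ≤ autGroup Γ)
    (hhigh : autGroup Γ ≤ wreathProduct (flipSym m) (⊤ : Subgroup (Perm (Fin k))))
    (hstab : autGroup Γ ⊓ fixAway (0 : Fin k) = atCoord (0 : Fin k) (symPart m)) :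
    ∃ lam kap, ∀ j x y, Γ.Adj (x, j) (y, j) ↔ (blockGraph m lam kap).Adj x y := by
  obtain ⟨lam, kap, h⟩ := exists_eq_blockGraph (G := Γ.comap fun x => (x, (0 : Fin k)))
    (fun c s x y => adj_prodCongr_iff hvt hlow hhigh c s 0 0 x y)
    (fun i i' hii => adj_zero_one_iff_not hvt hlow hhigh hstab hii)
  refine ⟨lam, kap, fun j x y => ?_⟩
  rw [← h, SimpleGraph.comap_adj]
  simpa using (adj_prodCongr_iff hvt hlow hhigh 1 1 j 0 x y).symm

end Stabiliser

/-- The vertex set of `Γ/X^k`. -/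
abbrev XOrbit (m k : ℕ) : Type :=
  MulAction.orbitRel.Quotient
    (basePower (symPart m) : Subgroup (Perm ((Fin 2 × Fin m) × Fin k)))
    ((Fin 2 × Fin m) × Fin k)

abbrev XOrbit.mk {m k : ℕ} (v : (Fin 2 × Fin m) × Fin k) : XOrbit m k :=
  Quotient.mk _ v

namespace XOrbit

variable {m k : ℕ}

lemma mk_eq_mk_iff {u v : (Fin 2 × Fin m) × Fin k} :
    mk u = mk v ↔ u.1.1 = v.1.1 ∧ u.2 = v.2 := by
  rw [Quotient.eq, MulAction.orbitRel_apply, MulAction.mem_orbit_iff]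
  constructor
  · rintro ⟨⟨σ, hσ⟩, rfl⟩
    obtain ⟨g, hg, rfl⟩ := mem_basePower.1 hσ
    obtain ⟨s, hs⟩ := mem_symPart.1 (hg v.2)
    simp [hs]
  · obtain ⟨⟨a, i⟩, j⟩ := u
    obtain ⟨⟨b, i'⟩, j'⟩ := v
    rintro ⟨rfl, rfl⟩
    refine ⟨⟨wreathPerm (fun _ => (1 : Perm (Fin 2)).prodCongr (swap i' i)) 1,
      mem_basePower.2 ⟨_, fun _ => mem_symPart.2 ⟨_, rfl⟩, rfl⟩⟩, ?_⟩
    simp [Subgroup.smul_def]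

def row : XOrbit m k → Fin 2 :=
  Quotient.lift (fun v => v.1.1) fun _ _ h => (mk_eq_mk_iff.1 (Quotient.sound h)).1

def fibre : XOrbit m k → Fin k :=
  Quotient.lift (fun v => v.2) fun _ _ h => (mk_eq_mk_iff.1 (Quotient.sound h)).2

@[simp] lemma row_mk (v : (Fin 2 × Fin m) × Fin k) : row (mk v) = v.1.1 := rfl

@[simp] lemma fibre_mk (v : (Fin 2 × Fin m) × Fin k) : fibre (mk v) = v.2 := rfl

lemma mk_row_fibre (α : XOrbit m k) (i : Fin m) : mk ((row α, i), fibre α) = α := by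
  induction α using Quotient.ind with
  | _ v => exact mk_eq_mk_iff.2 ⟨rfl, rfl⟩

def equivProd : (Fin 2 × Fin m) × Fin k ≃ XOrbit m k × Fin m where
  toFun v := (mk v, v.1.2)
  invFun p := ((row p.1, p.2), fibre p.1)
  left_inv _ := rfl
  right_inv p := by simp [mk_row_fibre]

@[simp] lemma equivProd_apply (v : (Fin 2 × Fin m) × Fin k) :
    equivProd v = (mk v, v.1.2) := rfl

lemma ext {α β : XOrbit m k} (hrow : row α = row β) (hfibre : fibre α = fibre β) :
    α = β := by
  induction α using Quotient.ind
  induction β using Quotient.ind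
  exact mk_eq_mk_iff.2 ⟨hrow, hfibre⟩

instance : DecidableEq (XOrbit m k) := fun α β =>
  decidable_of_iff (row α = row β ∧ fibre α = fibre β)
    ⟨fun h => ext h.1 h.2, fun h => h ▸ ⟨rfl, rfl⟩⟩

lemma mem_quotPart_iff {S : Set (XOrbit m k)} :
    S ∈ quotPart m k (basePower (symPart m)) ↔ ∃ j, S = fibre ⁻¹' {j} := by
  have hfib : ∀ j, {q : XOrbit m k | ∃ w, q = mk (w, j)} = fibre ⁻¹' {j} := fun j => by
    ext q
    induction q using Quotient.ind with
    | _ v => exact ⟨fun ⟨w, hw⟩ => (mk_eq_mk_iff.1 hw).2, fun hv => ⟨v.1, hv ▸ rfl⟩⟩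
  simp only [quotPart, hfib]
  rfl

lemma pair_mem_quotPart_iff {α β : XOrbit m k} :
    ({α, β} : Set (XOrbit m k)) ∈ quotPart m k (basePower (symPart m)) ↔
      fibre α = fibre β ∧ row α ≠ row β := by
  rw [mem_quotPart_iff]
  constructor
  · rintro ⟨j, hS⟩
    have hα : α ∈ fibre ⁻¹' {j} := hS ▸ Set.mem_insert α {β}
    have hβ : β ∈ fibre ⁻¹' {j} := hS ▸ Set.mem_insert_of_mem α rfl
    simp only [Set.mem_preimage, Set.mem_singleton_iff] at hα hβ
    refine ⟨hα.trans hβ.symm, fun hrow => ?_⟩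
    obtain ⟨v, rfl⟩ := Quotient.exists_rep α
    have hother : mk ((swap 0 1 v.1.1, v.1.2), j) ∈ ({mk v, β} : Set (XOrbit m k)) := by
      rw [hS]; rfl
    rw [← ext hrow (hα.trans hβ.symm), Set.pair_eq_singleton, Set.mem_singleton_iff,
      mk_eq_mk_iff] at hother
    exact (by decide : ∀ a : Fin 2, swap 0 1 a ≠ a) _ hother.1
  · rintro ⟨hfibre, hrow⟩
    refine ⟨fibre α, Set.ext fun q => ⟨?_, fun hq => ?_⟩⟩
    · rintro (rfl | rfl) <;> simp [hfibre]
    · rcases (by decide : ∀ r s t : Fin 2, s ≠ t → r = s ∨ r = t) _ _ _ hrow with h | h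
      · exact Or.inl (ext h hq)
      · exact Or.inr (ext h (hq.trans hfibre))

lemma fibre_eq_of_swap_image_mem_quotPart {a b : XOrbit m k}
    (hP : ∀ S ∈ quotPart m k (basePower (symPart m)),
      swap a b '' S ∈ quotPart m k (basePower (symPart m))) :
    fibre a = fibre b := by
  by_contra hne
  obtain ⟨l, hl⟩ := mem_quotPart_iff.1 (hP _ (mem_quotPart_iff.2 ⟨fibre a, rfl⟩))
  have hb : b ∈ fibre ⁻¹' {l} := hl ▸ ⟨a, rfl, swap_apply_left a b⟩
  obtain ⟨v, rfl⟩ := Quotient.exists_rep a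
  set a' := mk ((swap 0 1 v.1.1, v.1.2), v.2)
  have ha' : a' ≠ mk v := fun h =>
    (by decide : ∀ r : Fin 2, swap 0 1 r ≠ r) _ (mk_eq_mk_iff.1 h).1
  have hb' : a' ≠ b := fun h => hne (by rw [← h]; rfl)
  have : a' ∈ fibre ⁻¹' {l} := hl ▸ ⟨a', rfl, swap_apply_of_ne_of_ne ha' hb'⟩
  exact hne ((this : fibre a' = l).trans (hb : fibre b = l).symm)

end XOrbit

section QuotientGraph

variable {m k : ℕ} {Γ : SimpleGraph ((Fin 2 × Fin m) × Fin k)}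

lemma quotGraph_adj_mk_iff (hlow : basePower (symPart m) ≤ autGroup Γ)
    {u v : (Fin 2 × Fin m) × Fin k} (huv : u.2 ≠ v.2) :
    (quotGraph Γ (basePower (symPart m))).Adj (XOrbit.mk u) (XOrbit.mk v) ↔ Γ.Adj u v := by
  have hlift : ∀ {u v u' v' : (Fin 2 × Fin m) × Fin k}, u.2 ≠ v.2 →
      XOrbit.mk u' = XOrbit.mk u → XOrbit.mk v' = XOrbit.mk v → (Γ.Adj u' v' ↔ Γ.Adj u v) := by
    rintro ⟨⟨a, i⟩, j⟩ ⟨⟨b, i'⟩, j'⟩ ⟨⟨a', i₂⟩, j₂⟩ ⟨⟨b', i₂'⟩, j₂'⟩ h hu hv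
    obtain ⟨rfl, rfl⟩ := XOrbit.mk_eq_mk_iff.1 hu
    obtain ⟨rfl, rfl⟩ := XOrbit.mk_eq_mk_iff.1 hv
    exact adj_congr_cols_of_ne hlow h _ _ _ _ _ _
  simp only [quotGraph, SimpleGraph.fromRel_adj]
  constructor
  · rintro ⟨-, ⟨u', v', hu, hv, h⟩ | ⟨v', u', hv, hu, h⟩⟩
    · exact (hlift huv hu hv).1 h
    · exact (hlift huv hu hv).1 h.symm
  · intro h
    exact ⟨fun he => huv (XOrbit.mk_eq_mk_iff.1 he).2, Or.inl ⟨u, v, rfl, rfl, h⟩⟩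

lemma nonempty_iso_infGraph (hlow : basePower (symPart m) ≤ autGroup Γ) {lam kap : ZMod 2}
    (hfibre : ∀ j x y, Γ.Adj (x, j) (y, j) ↔ (blockGraph m lam kap).Adj x y) :
    Nonempty (Γ ≃g infGraph (quotGraph Γ (basePower (symPart m)))
      (quotPart m k (basePower (symPart m))) m lam kap) := by
  refine ⟨⟨XOrbit.equivProd, ?_⟩⟩
  rintro ⟨⟨a, i⟩, j⟩ ⟨⟨b, i'⟩, j'⟩
  simp only [XOrbit.equivProd_apply, infGraph_adj, XOrbit.pair_mem_quotPart_iff, XOrbit.row_mk,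
    XOrbit.fibre_mk, XOrbit.mk_eq_mk_iff, ne_eq, Prod.mk.injEq]
  by_cases hj : j = j'
  · subst hj
    rw [hfibre, blockGraph_adj]
    by_cases hab : a = b
    · subst hab
      have hmk : XOrbit.mk ((a, i), j) = XOrbit.mk ((a, i'), j) :=
        XOrbit.mk_eq_mk_iff.2 ⟨rfl, rfl⟩
      simp [hmk]
    · simp [hab]
  · rw [quotGraph_adj_mk_iff hlow (u := ((a, i), j)) (v := ((b, i'), j')) hj]
    simp [hj]

end QuotientGraph

lemma nonempty_induce_iso_of_adj_iff {α ι : Type*} {Γ : SimpleGraph (α × ι)} {j : ι}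
    {G : SimpleGraph α} (h : ∀ x y, Γ.Adj (x, j) (y, j) ↔ G.Adj x y) :
    Nonempty (Γ.induce {v | v.2 = j} ≃g G) :=
  ⟨⟨⟨fun v => v.1.1, fun x => ⟨(x, j), rfl⟩, fun ⟨⟨_, _⟩, hv⟩ => by subst hv; rfl,
      fun _ => rfl⟩,
    fun {v w} => by
      obtain ⟨⟨x, i⟩, hv⟩ := v
      obtain ⟨⟨y, i'⟩, hw⟩ := w
      change i = j at hv
      change i' = j at hw
      subst hv hw
      exact (h x y).symm⟩⟩

section Transposition

variable {m k : ℕ} {Γ : SimpleGraph ((Fin 2 × Fin m) × Fin k)}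

lemma onFibre_superflip_mem_autGroup (hvt : IsVertexTransitive Γ)
    (hlow : basePower (symPart m) ≤ autGroup Γ)
    (hhigh : autGroup Γ ≤ wreathProduct (flipSym m) (⊤ : Subgroup (Perm (Fin k))))
    (e : quotGraph Γ (basePower (symPart m)) ≃g quotGraph Γ (basePower (symPart m)))
    {a b : XOrbit m k} (he : ∀ q, e q = swap a b q) (hfibre : a.fibre = b.fibre)
    (hrow : a.row ≠ b.row) :
    onFibre a.fibre (superflip m) ∈ autGroup Γ := by
  have hflip : ∀ r s : Fin 2, r ≠ s → swap 0 1 r = s := by decide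
  have hmk : ∀ x, e (XOrbit.mk (x, a.fibre)) = XOrbit.mk (superflip m x, a.fibre) := by
    intro x
    rw [he]
    rcases (by decide : ∀ r s t : Fin 2, s ≠ t → r = s ∨ r = t) x.1 _ _ hrow with h | h
    · rw [XOrbit.ext (α := XOrbit.mk (x, a.fibre)) (β := a) h rfl, swap_apply_left]
      exact XOrbit.ext (by simp [superflip, h, hflip _ _ hrow]) hfibre.symm
    · rw [XOrbit.ext (α := XOrbit.mk (x, a.fibre)) (β := b) h hfibre, swap_apply_right]
      exact XOrbit.ext (by simp [superflip, h, hflip _ _ hrow.symm]) rfl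
  have hfix : ∀ v : (Fin 2 × Fin m) × Fin k, v.2 ≠ a.fibre →
      e (XOrbit.mk v) = XOrbit.mk v := fun v hv => by
      rw [he]
      exact swap_apply_of_ne_of_ne (fun h => hv (congrArg XOrbit.fibre h))
        (fun h => hv ((congrArg XOrbit.fibre h).trans hfibre.symm))
  refine onFibre_mem_autGroup (fun x y => ?_) (fun x v hv => ?_)
  · rw [superflip, wreathPerm_const]
    exact adj_prodCongr_iff hvt hlow hhigh _ _ _ _ x y
  · rw [← quotGraph_adj_mk_iff hlow (u := (superflip m x, a.fibre)) (Ne.symm hv),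
      ← quotGraph_adj_mk_iff hlow (u := (x, a.fibre)) (Ne.symm hv)]
    have := e.map_rel_iff (a := XOrbit.mk (x, a.fibre)) (b := XOrbit.mk v)
    rwa [hmk, hfix v hv] at this

lemma not_exists_transposition_quotGraph [NeZero k] (hvt : IsVertexTransitive Γ)
    (hlow : basePower (symPart m) ≤ autGroup Γ)
    (hhigh : autGroup Γ ≤ wreathProduct (flipSym m) (⊤ : Subgroup (Perm (Fin k))))
    (hstab : autGroup Γ ⊓ fixAway (0 : Fin k) = atCoord (0 : Fin k) (symPart m)) :
    ¬ ∃ e : quotGraph Γ (basePower (symPart m)) ≃g quotGraph Γ (basePower (symPart m)),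
        (∃ a b, a ≠ b ∧ e a = b ∧ e b = a ∧ ∀ q, q ≠ a → q ≠ b → e q = q) ∧
        ∀ S ∈ quotPart m k (basePower (symPart m)),
          (fun q => e q) '' S ∈ quotPart m k (basePower (symPart m)) := by
  rintro ⟨e, ⟨a, b, hab, hea, heb, hfix⟩, hP⟩
  have he : ∀ q, e q = swap a b q := fun q => by
    rw [swap_apply_def]
    split_ifs with ha hb
    exacts [ha ▸ hea, hb ▸ heb, hfix q ha hb]
  have hfibre := XOrbit.fibre_eq_of_swap_image_mem_quotPart (a := a) (b := b) fun S hS => by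
    simpa only [← he] using hP S hS
  have hrow : XOrbit.row a ≠ XOrbit.row b := fun h => hab (XOrbit.ext h hfibre)
  obtain ⟨v, rfl⟩ := Quotient.exists_rep a
  exact superflip_not_mem_symPart v.1.2 (mem_symPart_of_onFibre_mem_autGroup hvt hhigh hstab _
    (onFibre_superflip_mem_autGroup hvt hlow hhigh e he hfibre hrow))

end Transposition

/-- Theorem `prop:graphs_inf`.  Let `Γ` be a finite
vertex-transitive graph on `{1, -1, …, m, -m} × [k]` whose full automorphism group
`G` satisfies `X^k ≤ G ≤ Y ≀ Sym(k)`, where `X = {1} × Sym(m)` and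
`Y = ⟨τ⟩ × Sym(m)`, and whose pointwise stabiliser of the complement of `D₁` is
exactly the copy of `X` acting on `D₁`.  Then (1) all the induced subgraphs
`Γ[D_j]` are mutually isomorphic, and `Γ[D₁]` is isomorphic to `m K₂`,
`K_m □ K₂`, or the complement of one of these; (2) `Γ ≅ Inf_{λ,κ}(Γ/X^k, 𝓓/X^k, m)`
with `(λ,κ) = (1,0), (1,1), (0,1), (0,0)` according to the four cases; and (3) the
quotient graph `Γ/X^k` admits no transposition preserving `𝓓/X^k` as an
automorphism. -/
theorem statement_18 (m k : ℕ) [NeZero k]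
    (Γ : SimpleGraph ((Fin 2 × Fin m) × Fin k)) (hvt : IsVertexTransitive Γ)
    (hlow : basePower (symPart m) ≤ autGroup Γ)
    (hhigh : autGroup Γ ≤ wreathProduct (flipSym m) (⊤ : Subgroup (Equiv.Perm (Fin k))))
    (hstab : autGroup Γ ⊓ fixAway (0 : Fin k) = atCoord (0 : Fin k) (symPart m)) :
    -- (1)
    ((∀ j j' : Fin k, Nonempty (Γ.induce (Dblock m k j) ≃g Γ.induce (Dblock m k j'))) ∧
      (Nonempty (Γ.induce (Dblock m k 0) ≃g matching m) ∨
       Nonempty (Γ.induce (Dblock m k 0) ≃g prism m) ∨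
       Nonempty (Γ.induce (Dblock m k 0) ≃g (matching m)ᶜ) ∨
       Nonempty (Γ.induce (Dblock m k 0) ≃g (prism m)ᶜ))) ∧
    -- (2)
    ((Nonempty (Γ.induce (Dblock m k 0) ≃g matching m) →
        Nonempty (Γ ≃g infGraph (quotGraph Γ (basePower (symPart m)))
          (quotPart m k (basePower (symPart m))) m 1 0)) ∧
     (Nonempty (Γ.induce (Dblock m k 0) ≃g prism m) →
        Nonempty (Γ ≃g infGraph (quotGraph Γ (basePower (symPart m)))
          (quotPart m k (basePower (symPart m))) m 1 1)) ∧
     (Nonempty (Γ.induce (Dblock m k 0) ≃g (matching m)ᶜ) →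
        Nonempty (Γ ≃g infGraph (quotGraph Γ (basePower (symPart m)))
          (quotPart m k (basePower (symPart m))) m 0 1)) ∧
     (Nonempty (Γ.induce (Dblock m k 0) ≃g (prism m)ᶜ) →
        Nonempty (Γ ≃g infGraph (quotGraph Γ (basePower (symPart m)))
          (quotPart m k (basePower (symPart m))) m 0 0))) ∧
    -- (3)
    ¬ ∃ e : quotGraph Γ (basePower (symPart m)) ≃g quotGraph Γ (basePower (symPart m)),
        (∃ a b, a ≠ b ∧ e a = b ∧ e b = a ∧ ∀ q, q ≠ a → q ≠ b → e q = q) ∧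
        ∀ S ∈ quotPart m k (basePower (symPart m)),
          (fun q => e q) '' S ∈ quotPart m k (basePower (symPart m)) := by
  obtain ⟨lam, kap, hfibre⟩ := exists_adj_fibre_iff_blockGraph hvt hlow hhigh hstab
  have hD : ∀ j, Nonempty (Γ.induce (Dblock m k j) ≃g blockGraph m lam kap) :=
    fun j => nonempty_induce_iso_of_adj_iff (hfibre j)
  obtain ⟨φ⟩ := nonempty_iso_infGraph hlow hfibre
  have hInf : ∀ lam' kap', Nonempty (Γ.induce (Dblock m k 0) ≃g blockGraph m lam' kap') →
      Nonempty (Γ ≃g infGraph (quotGraph Γ (basePower (symPart m)))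
        (quotPart m k (basePower (symPart m))) m lam' kap') := by
    rintro lam' kap' ⟨e⟩
    obtain ⟨ψ⟩ := nonempty_infGraph_iso_of_blockGraph_iso _ _ XOrbit.row
      (fun _ _ h => (XOrbit.pair_mem_quotPart_iff.1 h).2) ((hD 0).some.symm.trans e)
    exact ⟨φ.trans ψ⟩
  refine ⟨⟨fun j j' => ⟨(hD j).some.trans (hD j').some.symm⟩, ?_⟩,
    ⟨?_, ?_, ?_, ?_⟩, not_exists_transposition_quotGraph hvt hlow hhigh hstab⟩
  · obtain ⟨e⟩ := hD 0
    rcases blockGraph_cases lam kap with h | h | h | h <;> rw [h] at e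
    exacts [Or.inl ⟨e⟩, Or.inr (Or.inl ⟨e⟩), Or.inr (Or.inr (Or.inl ⟨e⟩)),
      Or.inr (Or.inr (Or.inr ⟨e⟩))]
  · rw [matching_eq_blockGraph]
    exact hInf 1 0
  · rw [prism_eq_blockGraph]
    exact hInf 1 1
  · rw [compl_matching_eq_blockGraph]
    exact hInf 0 1
  · rw [compl_prism_eq_blockGraph]
    exact hInf 0 0
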